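/- arXiv:1702.08149 — 6 statements merged into one kernel-verified Lean document; each statement's English description precedes it below -/
import Mathlib

section
/- Let F be a field with an involution c, let V be an F-vector space of finite dimension k ≥ 2, and let T : V → V be an invertible linear map whose characteristic polynomial equals its minimal polynomial and equals p(x)^d, where p is monic irreducible over F with p ∉ {x, x−1, x+1} (so T is cyclic and non-unipotent), and suppose p(x)^d is self-dual. Then there exists a T-invariant nondegenerate c-hermitian form on V. -/
/-!
Since the minimal and characteristic polynomials of `T` agree, `V` is isomorphic to
`A = F[X]/(f)`, `f = p ^ d`, with `T` acting as multiplication by the root `x`. Self-duality of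
`f` is exactly what makes `x ↦ x⁻¹`, extended `c`-semilinearly, a well-defined ring involution
`J` of `A`. For a functional `ℓ` with `ℓ ∘ J = c ∘ ℓ`, the form `(a, b) ↦ ℓ (a * J b)` is
`c`-hermitian and, as `x * J x = 1`, invariant under multiplication by `x`; it is nondegenerate
as soon as `ℓ` does not vanish on the minimal ideal `p ^ (d - 1) A`, which every nonzero ideal
contains. Such an `ℓ` (of the form `μ + c ∘ μ ∘ J`) exists unless `J = -1` on that ideal, and this
would force `x ^ 2 = 1` on it, i.e. `p ∣ X ^ 2 - 1`.
-/

open Polynomial Module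

noncomputable def dualPoly {F : Type*} [Field F] (c : F →+* F) (f : Polynomial F) :
    Polynomial F :=
  (c (f.coeff 0))⁻¹ • (f.map c).reverse

section

variable {F : Type*} [Field F] {c : F →+* F}

section HermitianFunctional

variable {M : Type*} [AddCommGroup M] [Module F M]

theorem eq_neg_of_forall_dual_add_eq_zero {a b : M}
    (h : ∀ μ : Dual F M, μ a + c (μ b) = 0) : b = -a := by
  by_cases hc : ∀ β, c β = β
  · rw [eq_neg_iff_add_eq_zero, add_comm]
    refine (forall_dual_apply_eq_zero_iff F _).1 fun μ => ?_
    simpa [hc] using h μ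
  · obtain ⟨β, hβ⟩ := not_forall.1 hc
    have ha : ∀ μ : Dual F M, μ a = 0 := fun μ => by
      have hβμ := h (β • μ)
      simp only [LinearMap.smul_apply, smul_eq_mul, map_mul] at hβμ
      have : (β - c β) * μ a = 0 := by linear_combination hβμ - c β * h μ
      exact (mul_eq_zero.1 this).resolve_left (sub_ne_zero.2 (Ne.symm hβ))
    have hb : ∀ μ : Dual F M, μ b = 0 := fun μ => by
      simpa [ha μ] using h μ
    rw [(forall_dual_apply_eq_zero_iff F a).1 ha, (forall_dual_apply_eq_zero_iff F b).1 hb,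
      neg_zero]

theorem exists_hermitian_dual_apply_ne_zero (hc : ∀ x, c (c x) = x) (J : M →ₛₗ[c] M)
    (hJ : ∀ a, J (J a) = a) {a : M} (ha : J a ≠ -a) :
    ∃ ℓ : Dual F M, (∀ b, ℓ (J b) = c (ℓ b)) ∧ ℓ a ≠ 0 := by
  by_contra! h
  refine ha (eq_neg_of_forall_dual_add_eq_zero fun μ => h
    { toFun b := μ b + c (μ (J b))
      map_add' b b' := by simp only [map_add]; ring
      map_smul' α b := by
        simp only [map_smulₛₗ, smul_eq_mul, map_mul, hc, RingHom.id_apply]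
        ring } fun b => ?_)
  simp only [LinearMap.coe_mk, AddHom.coe_mk, hJ, map_add, hc]
  ring

end HermitianFunctional

section MulConjForm

variable {A : Type*} [CommRing A] [Algebra F A]

theorem exists_hermitian_dual_faithful (hc : ∀ x, c (c x) = x) (J : A →ₛₗ[c] A)
    (hJ : ∀ a, J (J a) = a) {m y : A} (hm : ∀ a ≠ 0, ∃ b, a * b = m)
    (hy : J (m * y) ≠ -(m * y)) :
    ∃ ℓ : Dual F A, (∀ a, ℓ (J a) = c (ℓ a)) ∧ ∀ a ≠ 0, ∃ b, ℓ (a * b) ≠ 0 := by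
  obtain ⟨ℓ, hℓ, hℓy⟩ := exists_hermitian_dual_apply_ne_zero hc J hJ hy
  refine ⟨ℓ, hℓ, fun a ha => ?_⟩
  obtain ⟨b, hb⟩ := hm a ha
  exact ⟨b * y, by rwa [← mul_assoc, hb]⟩

def mulConjForm (ℓ : Dual F A) (J : A →ₛₗ[c] A) : A →ₗ[F] A →ₛₗ[c] F :=
  LinearMap.mk₂'ₛₗ (RingHom.id F) c (fun a b => ℓ (a * J b))
    (fun _ _ _ => by rw [add_mul, map_add])
    (fun _ _ _ => by rw [smul_mul_assoc, map_smul]; rfl)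
    (fun _ _ _ => by rw [map_add, mul_add, map_add])
    (fun _ _ _ => by rw [map_smulₛₗ, mul_smul_comm, map_smul])

variable {ℓ : Dual F A} {J : A →ₛₗ[c] A}

theorem mulConjForm_apply (a b : A) : mulConjForm ℓ J a b = ℓ (a * J b) := rfl

theorem conj_mulConjForm (hJmul : ∀ a b, J (a * b) = J a * J b) (hJ : ∀ a, J (J a) = a)
    (hℓ : ∀ a, ℓ (J a) = c (ℓ a)) (a b : A) :
    c (mulConjForm ℓ J a b) = mulConjForm ℓ J b a := by
  rw [mulConjForm_apply, mulConjForm_apply, ← hℓ, hJmul, hJ, mul_comm]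

theorem mulConjForm_separatingLeft (hJ : ∀ a, J (J a) = a)
    (hℓ : ∀ a ≠ 0, ∃ b, ℓ (a * b) ≠ 0) : (mulConjForm ℓ J).SeparatingLeft := by
  intro a ha
  by_contra h0
  obtain ⟨b, hb⟩ := hℓ a h0
  exact hb (by simpa only [mulConjForm_apply, hJ] using ha (J b))

theorem mulConjForm_mul_mul (hJmul : ∀ a b, J (a * b) = J a * J b) {x : A} (hx : x * J x = 1)
    (a b : A) : mulConjForm ℓ J (x * a) (x * b) = mulConjForm ℓ J a b := by
  rw [mulConjForm_apply, mulConjForm_apply, hJmul, mul_mul_mul_comm, hx, one_mul]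

end MulConjForm

theorem exists_invariant_hermitian_of_linearEquiv {A V : Type*} [AddCommGroup A] [Module F A]
    [AddCommGroup V] [Module F V] (B : A →ₗ[F] A →ₛₗ[c] F) (hB : ∀ a b, c (B a b) = B b a)
    (hsep : B.SeparatingLeft) {S : A → A} (hS : ∀ a b, B (S a) (S b) = B a b)
    (Φ : A ≃ₗ[F] V) {T : V → V} (hΦ : ∀ a, Φ (S a) = T (Φ a)) :
    ∃ σ : V → V → F,
      (∀ u v w : V, σ (u + v) w = σ u w + σ v w) ∧
      (∀ u v w : V, σ u (v + w) = σ u v + σ u w) ∧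
      (∀ (a b : F) (v w : V), σ (a • v) (b • w) = a * c b * σ v w) ∧
      (∀ v w : V, σ v w = c (σ w v)) ∧
      (∀ v : V, (∀ w : V, σ v w = 0) → v = 0) ∧
      (∀ v w : V, σ (T v) (T w) = σ v w) := by
  have hΦT : ∀ v, Φ.symm (T v) = S (Φ.symm v) := fun v => by
    rw [Φ.symm_apply_eq, hΦ, Φ.apply_symm_apply]
  refine ⟨fun v w => B (Φ.symm v) (Φ.symm w), ?_, ?_, ?_, fun v w => (hB _ _).symm, ?_, ?_⟩
  · intro u v w
    simp only [map_add, LinearMap.add_apply]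
  · intro u v w
    simp only [map_add]
  · intro a b v w
    simp only [map_smul, map_smulₛₗ, LinearMap.smul_apply, smul_eq_mul]
    ring
  · intro v hv
    simpa using hsep (Φ.symm v) fun a => by simpa using hv (Φ a)
  · intro v w
    simp only [hΦT, hS]

theorem dvd_of_pow_dvd_mul_pow_pred {R : Type*} [CommMonoidWithZero R] [IsCancelMulZero R]
    {p g : R} (hp : p ≠ 0) {d : ℕ} (hd : d ≠ 0) (h : p ^ d ∣ g * p ^ (d - 1)) : p ∣ g := by
  obtain ⟨n, rfl⟩ := Nat.exists_eq_succ_of_ne_zero hd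
  rw [Nat.succ_sub_one, pow_succ'] at h
  exact (mul_dvd_mul_iff_right (pow_ne_zero n hp)).1 h

theorem Polynomial.eq_X_sub_one_or_eq_X_add_one_of_dvd_X_sq_sub_one {p : F[X]} (hp : p.Monic)
    (hirr : Irreducible p) (h : p ∣ X ^ 2 - 1) : p = X - 1 ∨ p = X + 1 := by
  have hlin : ∀ q : F[X], q.Monic → q.natDegree = 1 → p ∣ q → p = q := fun q hq hq1 hpq =>
    (eq_of_monic_of_dvd_of_natDegree_le hp hq hpq (hq1 ▸ hirr.natDegree_pos)).symm
  rw [show (X ^ 2 - 1 : F[X]) = (X - C 1) * (X + C 1) by rw [C_1]; ring] at h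
  rcases hirr.prime.dvd_or_dvd h with h | h
  · left; simpa using hlin _ (monic_X_sub_C 1) (natDegree_X_sub_C 1) h
  · right; simpa using hlin _ (monic_X_add_C 1) (natDegree_X_add_C 1) h

theorem Polynomial.reverse_map_eq_smul_of_dualPoly_eq {f : F[X]} (hf0 : f.coeff 0 ≠ 0)
    (h : dualPoly c f = f) : (f.map c).reverse = c (f.coeff 0) • f := by
  calc (f.map c).reverse = c (f.coeff 0) • dualPoly c f := by
        rw [dualPoly, smul_smul, mul_inv_cancel₀ ((_root_.map_ne_zero c).2 hf0), one_smul]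
    _ = c (f.coeff 0) • f := by rw [h]

namespace AdjoinRoot

section PrimePower

variable {p : F[X]} {d : ℕ}

theorem dvd_of_mk_mul_pow_pred_eq_zero (hp : p ≠ 0) (hd : d ≠ 0) {g : F[X]}
    (h : mk (p ^ d) (g * p ^ (d - 1)) = 0) : p ∣ g :=
  dvd_of_pow_dvd_mul_pow_pred hp hd (mk_eq_zero.1 h)

theorem exists_mul_eq_mk_pow_pred (hp : Prime p) {a : AdjoinRoot (p ^ d)} (ha : a ≠ 0) :
    ∃ b, a * b = mk (p ^ d) (p ^ (d - 1)) := by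
  classical
  obtain ⟨g, rfl⟩ := mk_surjective a
  have hg : ¬ p ^ d ∣ g := fun h => ha (mk_eq_zero.2 h)
  obtain ⟨i, hi, hgcd⟩ := (dvd_prime_pow hp d).1 (EuclideanDomain.gcd_dvd_right g (p ^ d))
  have hid : i ≠ d := by
    rintro rfl
    exact hg (hgcd.symm.dvd.trans (EuclideanDomain.gcd_dvd_left g _))
  obtain ⟨q, hq⟩ : EuclideanDomain.gcd g (p ^ d) ∣ p ^ (d - 1) :=
    hgcd.dvd.trans (pow_dvd_pow p (by omega))
  refine ⟨mk _ (EuclideanDomain.gcdA g (p ^ d) * q), ?_⟩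
  rw [← map_mul, mk_eq_mk, hq, EuclideanDomain.gcd_eq_gcd_ab]
  exact ⟨-(EuclideanDomain.gcdB g (p ^ d) * q), by ring⟩

end PrimePower

section Involution

variable {f : F[X]}

theorem isUnit_root (hf0 : f.coeff 0 ≠ 0) : IsUnit (root f) := by
  obtain ⟨q, hq⟩ := X_dvd_sub_C (p := f)
  have h : root f * mk f q = -of f (f.coeff 0) := by
    rw [← mk_X, ← map_mul, ← hq, map_sub, mk_self, zero_sub, mk_C]
  exact isUnit_of_mul_isUnit_left (h ▸ ((Ne.isUnit hf0).map (of f)).neg)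

theorem eval₂_of_comp_root_inv_eq_zero (hf0 : f.coeff 0 ≠ 0) (hsd : dualPoly c f = f) :
    f.eval₂ ((of f).comp c) ↑(isUnit_root hf0).unit⁻¹ = 0 := by
  rw [← eval₂_map, ← eval₂_reverse_eq_zero_iff, invOf_units, inv_inv, IsUnit.unit_spec,
    reverse_map_eq_smul_of_dualPoly_eq hf0 hsd, eval₂_smul, eval₂_root, mul_zero]

variable (c) in
noncomputable def conjInv (hf0 : f.coeff 0 ≠ 0) (hsd : dualPoly c f = f) :
    AdjoinRoot f →ₛₗ[c] AdjoinRoot f where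
  toFun := lift ((of f).comp c) _ (eval₂_of_comp_root_inv_eq_zero hf0 hsd)
  map_add' := map_add _
  map_smul' α a := by
    simp only [Algebra.smul_def, map_mul, algebraMap_eq, lift_of, RingHom.comp_apply]

variable {hf0 : f.coeff 0 ≠ 0} {hsd : dualPoly c f = f}

theorem conjInv_mul (a b : AdjoinRoot f) :
    conjInv c hf0 hsd (a * b) = conjInv c hf0 hsd a * conjInv c hf0 hsd b :=
  map_mul (lift ((of f).comp c) _ (eval₂_of_comp_root_inv_eq_zero hf0 hsd)) a b

theorem root_mul_conjInv_root : root f * conjInv c hf0 hsd (root f) = 1 := by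
  rw [conjInv, LinearMap.coe_mk, AddHom.coe_mk, lift_root]
  exact (isUnit_root hf0).mul_val_inv

theorem conjInv_conjInv (hc : ∀ x, c (c x) = x) (a : AdjoinRoot f) :
    conjInv c hf0 hsd (conjInv c hf0 hsd a) = a := by
  set u := (isUnit_root hf0).unit
  set φ := lift ((of f).comp c) _ (eval₂_of_comp_root_inv_eq_zero hf0 hsd)
  have hu : (u : AdjoinRoot f) = root f := IsUnit.unit_spec _
  have hφroot : φ (root f) = ↑u⁻¹ := lift_root _
  have hφu : φ ↑u⁻¹ = u := by
    have h : φ ↑u⁻¹ * φ ↑u = 1 := by rw [← map_mul, Units.inv_mul, map_one]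
    rwa [hu, hφroot, Units.mul_eq_one_iff_eq_inv, inv_inv] at h
  have hφφ : φ.comp φ = RingHom.id _ := by
    refine ringHom_ext (RingHom.ext fun α => by simp [φ, lift_of, hc]) ?_
    rw [RingHom.comp_apply, hφroot, hφu, hu, RingHom.id_apply]
  exact congr($hφφ a)

end Involution

theorem exists_conjInv_mul_ne_neg {p : F[X]} {d : ℕ} (hp : p.Monic)
    (hirr : Irreducible p) (hd : d ≠ 0) (hpXm : p ≠ X - 1) (hpXp : p ≠ X + 1)
    (hf0 : (p ^ d).coeff 0 ≠ 0) (hsd : dualPoly c (p ^ d) = p ^ d) :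
    ∃ y, conjInv c hf0 hsd (mk (p ^ d) (p ^ (d - 1)) * y) ≠ -(mk (p ^ d) (p ^ (d - 1)) * y) := by
  set m := mk (p ^ d) (p ^ (d - 1))
  set x := root (p ^ d)
  by_contra! h
  have hm : m * x ^ 2 = m := by
    have hxJx : x * conjInv c hf0 hsd x = 1 := root_mul_conjInv_root
    have h1 := h 1
    have h2 := h x
    rw [mul_one] at h1
    rw [conjInv_mul, h1] at h2
    linear_combination x * h2 + m * hxJx
  have hdvd : p ∣ X ^ 2 - 1 := by
    refine dvd_of_mk_mul_pow_pred_eq_zero hirr.ne_zero hd ?_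
    rw [map_mul, map_sub, map_pow, mk_X, map_one, sub_mul, one_mul, mul_comm, hm, sub_self]
  rcases eq_X_sub_one_or_eq_X_add_one_of_dvd_X_sq_sub_one hp hirr hdvd with h | h
  exacts [hpXm h, hpXp h]

end AdjoinRoot

open AdjoinRoot in
theorem exists_linearEquiv_adjoinRoot_pow {V : Type*} [AddCommGroup V] [Module F V]
    [FiniteDimensional F V] (T : V →ₗ[F] V) {p : F[X]} {d : ℕ} (hirr : Irreducible p)
    (hd : d ≠ 0) (hmin : minpoly F T = p ^ d) (hdeg : (p ^ d).natDegree = finrank F V) :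
    ∃ Φ : AdjoinRoot (p ^ d) ≃ₗ[F] V, ∀ a, Φ (root (p ^ d) * a) = T (Φ a) := by
  set ψ : AdjoinRoot (p ^ d) →ₐ[F] Module.End F V :=
    Ideal.Quotient.liftₐ _ (aeval T) fun g hg => by
      obtain ⟨q, rfl⟩ := Ideal.mem_span_singleton.1 hg
      rw [map_mul, ← hmin, minpoly.aeval, zero_mul]
  have hψ_eq_zero : ∀ a, ψ a = 0 → a = 0 := by
    intro a ha
    obtain ⟨g, rfl⟩ := mk_surjective a
    exact mk_eq_zero.2 (hmin ▸ minpoly.dvd F T ha)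
  obtain ⟨e, he⟩ : ∃ e, ψ (mk (p ^ d) (p ^ (d - 1))) e ≠ 0 := by
    by_contra! h
    refine hirr.not_isUnit (isUnit_of_dvd_one (dvd_of_mk_mul_pow_pred_eq_zero hirr.ne_zero hd ?_))
    rw [one_mul]
    exact hψ_eq_zero _ (LinearMap.ext h)
  set Φ₀ := LinearMap.applyₗ e ∘ₗ ψ.toLinearMap
  have hinj : Function.Injective Φ₀ := by
    refine (injective_iff_map_eq_zero Φ₀).2 fun a ha => by_contra fun ha0 => he ?_
    obtain ⟨b, hb⟩ := exists_mul_eq_mk_pow_pred hirr.prime ha0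
    rw [← hb, mul_comm, map_mul, Module.End.mul_apply]
    exact (congrArg (ψ b) ha).trans (map_zero _)
  have hrank : finrank F (AdjoinRoot (p ^ d)) = finrank F V :=
    finrank_quotient_span_eq_natDegree.trans hdeg
  have : FiniteDimensional F (AdjoinRoot (p ^ d)) :=
    (powerBasis (pow_ne_zero d hirr.ne_zero)).finite
  refine ⟨Φ₀.linearEquivOfInjective hinj hrank, fun a => ?_⟩
  have hψroot : ψ (root (p ^ d)) = T := aeval_X T
  simp [Φ₀, hψroot]

end

theorem cyclic_self_dual_admits_invariant_hermitian_form_general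
    {F : Type*} [Field F] (c : F →+* F) (hc : ∀ x, c (c x) = x)
    {V : Type*} [AddCommGroup V] [Module F V] [FiniteDimensional F V]
    (hdim : 2 ≤ finrank F V)
    (T : V →ₗ[F] V) (hT : Function.Bijective T)
    (p : Polynomial F) (d : ℕ) (hmonic : p.Monic) (hirr : Irreducible p)
    (hpXm : p ≠ X - 1) (hpXp : p ≠ X + 1)
    (hchar : LinearMap.charpoly T = p ^ d)
    (hmin : minpoly F T = p ^ d)
    (hsd : dualPoly c (p ^ d) = p ^ d) :
    ∃ σ : V → V → F,
      (∀ u v w : V, σ (u + v) w = σ u w + σ v w) ∧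
      (∀ u v w : V, σ u (v + w) = σ u v + σ u w) ∧
      (∀ (a b : F) (v w : V), σ (a • v) (b • w) = a * c b * σ v w) ∧
      (∀ v w : V, σ v w = c (σ w v)) ∧
      (∀ v : V, (∀ w : V, σ v w = 0) → v = 0) ∧
      (∀ v w : V, σ (T v) (T w) = σ v w) := by
  have hdeg : (p ^ d).natDegree = finrank F V := hchar ▸ T.charpoly_natDegree
  have hd : d ≠ 0 := by
    rintro rfl
    rw [pow_zero, natDegree_one] at hdeg
    omega
  have hf0 : (p ^ d).coeff 0 ≠ 0 := by
    rw [← hchar, ← constantCoeff_apply]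
    exact ((LinearMap.not_hasEigenvalue_zero_tfae T).out 5 2).1
      ((injective_iff_map_eq_zero T).1 hT.1)
  obtain ⟨Φ, hΦ⟩ := exists_linearEquiv_adjoinRoot_pow T hirr hd hmin hdeg
  obtain ⟨y, hy⟩ := AdjoinRoot.exists_conjInv_mul_ne_neg hmonic hirr hd hpXm hpXp hf0 hsd
  obtain ⟨ℓ, hℓ, hfaithful⟩ := exists_hermitian_dual_faithful hc _
    (AdjoinRoot.conjInv_conjInv hc) (fun _ => AdjoinRoot.exists_mul_eq_mk_pow_pred hirr.prime) hy
  exact exists_invariant_hermitian_of_linearEquiv _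
    (conj_mulConjForm AdjoinRoot.conjInv_mul (AdjoinRoot.conjInv_conjInv hc) hℓ)
    (mulConjForm_separatingLeft (AdjoinRoot.conjInv_conjInv hc) hfaithful)
    (mulConjForm_mul_mul AdjoinRoot.conjInv_mul AdjoinRoot.root_mul_conjInv_root) Φ hΦ

/-- Let `F` be a field with an involution `c`, `V` an `F`-vector space of
finite dimension `k ≥ 2`, and `T` an invertible linear map which is cyclic (charpoly =
minpoly = `p^d`) and non-unipotent (`p ∉ {x, x-1, x+1}`), with `p^d` self-dual. Then there
exists a `T`-invariant nondegenerate `c`-hermitian form on `V`. -/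
theorem cyclic_self_dual_admits_invariant_hermitian_form
    {F : Type*} [Field F] (c : F →+* F) (hc : ∀ x, c (c x) = x)
    {V : Type*} [AddCommGroup V] [Module F V] [FiniteDimensional F V]
    (hdim : 2 ≤ finrank F V)
    (T : V →ₗ[F] V) (hT : Function.Bijective T)
    (p : Polynomial F) (d : ℕ) (hmonic : p.Monic) (hirr : Irreducible p)
    (hpX : p ≠ X) (hpXm : p ≠ X - 1) (hpXp : p ≠ X + 1)
    (hchar : LinearMap.charpoly T = p ^ d)
    (hmin : minpoly F T = p ^ d)
    (hsd : dualPoly c (p ^ d) = p ^ d) :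
    ∃ σ : V → V → F,
      (∀ u v w : V, σ (u + v) w = σ u w + σ v w) ∧
      (∀ u v w : V, σ u (v + w) = σ u v + σ u w) ∧
      (∀ (a b : F) (v w : V), σ (a • v) (b • w) = a * c b * σ v w) ∧
      (∀ v w : V, σ v w = c (σ w v)) ∧
      (∀ v : V, (∀ w : V, σ v w = 0) → v = 0) ∧
      (∀ v w : V, σ (T v) (T w) = σ v w) :=
  cyclic_self_dual_admits_invariant_hermitian_form_general c hc hdim T hT p d hmonic hirr hpXm hpXp
    hchar hmin hsd
end

section
/- Let F be a field with a nontrivial involution c, let V be an F-vector space of finite dimension k ≥ 2, and let T : V → V be an invertible linear map whose characteristic polynomial equals its minimal polynomial and equals p(x)^d, with p monic irreducible over F, p ∉ {x, x−1, x+1}, and p(x)^d self-dual. Then there exists a T-invariant nondegenerate c-hermitian form on V; and if moreover char(F) ≠ 2, there also exists a T-invariant nondegenerate c-skew-hermitian form on V. -/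
open Polynomial Module

/-!
A cyclic `T` with minimal polynomial `f = p^d` turns `V` into a copy of `A = F[X]/(f)` on which
`T` acts as multiplication by the root `t`. Self-duality of `f` says that `t⁻¹` is a root of
`f^c`, so `c` extends to a semilinear ring involution `a ↦ ā` of `A` with `t̄ = t⁻¹`. For every
`F`-linear `ℓ : A → F` with `ℓ ā = c (ℓ a)`, the form `(a, b) ↦ ℓ (a b̄)` is `c`-hermitian and
invariant under multiplication by `t`. Since `A` is local with minimal ideal `p^(d-1) A`, the
form is nondegenerate as soon as `ℓ (p^(d-1)) ≠ 0`, and such an `ℓ` is obtained by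
symmetrising a functional, which is possible because `c` is nontrivial. Multiplying by a
nonzero `ω = γ - c γ`, for which `c ω = -ω`, makes the form skew-hermitian.
-/

theorem pow_mem_span_pair_of_not_dvd {R : Type*} [CommRing R] [IsDomain R] [IsBezout R]
    {p q : R} (hp : Prime p) {n : ℕ} (hq : ¬p ^ (n + 1) ∣ q) :
    p ^ n ∈ Ideal.span {q, p ^ (n + 1)} := by
  rw [← IsBezout.span_gcd, Ideal.mem_span_singleton]
  obtain ⟨i, hi, hgi⟩ := (dvd_prime_pow hp _).mp (IsBezout.gcd_dvd_right q (p ^ (n + 1)))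
  have hin : i ≠ n + 1 := by
    rintro rfl
    exact hq (hgi.symm.dvd.trans (IsBezout.gcd_dvd_left _ _))
  exact hgi.dvd.trans (pow_dvd_pow p (by omega))

section

variable {F : Type*} [Field F] {V : Type*} [AddCommGroup V] [Module F V]

theorem exists_pow_dvd_of_aeval_apply_eq_zero {T : V →ₗ[F] V} {p : F[X]} (hp : Prime p) {n : ℕ}
    (hT : minpoly F T = p ^ (n + 1)) :
    ∃ v : V, ∀ q : F[X], aeval T q v = 0 → p ^ (n + 1) ∣ q := by
  obtain ⟨v, hv⟩ : ∃ v, aeval T (p ^ n) v ≠ 0 := by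
    by_contra! h
    have := minpoly.dvd F T (LinearMap.ext h)
    rw [hT, pow_dvd_pow_iff hp.ne_zero hp.not_isUnit] at this
    omega
  refine ⟨v, fun q hq => by_contra fun hdvd => hv ?_⟩
  obtain ⟨a, b, hab⟩ := Ideal.mem_span_pair.mp (pow_mem_span_pair_of_not_dvd hp hdvd)
  rw [← hab, ← hT]
  simp [hq]

theorem AdjoinRoot.exists_mul_eq_mk_pow {p : F[X]} (hp : Prime p) {n : ℕ}
    {a : AdjoinRoot (p ^ (n + 1))} (ha : a ≠ 0) : ∃ b, a * b = mk (p ^ (n + 1)) (p ^ n) := by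
  obtain ⟨q, rfl⟩ := AdjoinRoot.mk_surjective a
  obtain ⟨u, v, huv⟩ := Ideal.mem_span_pair.mp
    (pow_mem_span_pair_of_not_dvd hp (mt AdjoinRoot.mk_eq_zero.mpr ha))
  refine ⟨AdjoinRoot.mk _ u, ?_⟩
  rw [← huv, map_add, map_mul, map_mul (AdjoinRoot.mk _) v, AdjoinRoot.mk_self, mul_zero,
    add_zero, mul_comm]

theorem exists_linearEquiv_adjoinRoot [FiniteDimensional F V] (T : V →ₗ[F] V) {f : F[X]}
    (hfT : aeval T f = 0) (hf : f.natDegree = finrank F V) {v : V}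
    (hv : ∀ q, aeval T q v = 0 → f ∣ q) :
    ∃ Ψ : V ≃ₗ[F] AdjoinRoot f, ∀ w, Ψ (T w) = AdjoinRoot.root f * Ψ w := by
  let ev : AdjoinRoot f →ₐ[F] Module.End F V := Ideal.Quotient.liftₐ _ (aeval T) fun q hq => by
    obtain ⟨r, rfl⟩ := Ideal.mem_span_singleton.mp hq
    simp [hfT]
  let Φ : AdjoinRoot f →ₗ[F] V := (LinearMap.applyₗ v).comp ev.toLinearMap
  have hinj : Function.Injective Φ := by
    refine (injective_iff_map_eq_zero Φ).mpr fun a ha => ?_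
    obtain ⟨q, rfl⟩ := AdjoinRoot.mk_surjective a
    exact AdjoinRoot.mk_eq_zero.mpr (hv q ha)
  have := Module.Finite.of_injective Φ hinj
  have hrank : finrank F (AdjoinRoot f) = finrank F V := finrank_quotient_span_eq_natDegree.trans hf
  have hroot : ev (AdjoinRoot.root f) = T := aeval_X T
  let E := LinearEquiv.ofBijective Φ
    ⟨hinj, (LinearMap.injective_iff_surjective_of_finrank_eq_finrank hrank).mp hinj⟩
  have hE : ∀ a, E (AdjoinRoot.root f * a) = T (E a) := fun a => by
    show ev (AdjoinRoot.root f * a) v = T (ev a v)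
    rw [map_mul, hroot, Module.End.mul_apply]
  refine ⟨E.symm, fun w => ?_⟩
  rw [E.symm_apply_eq, hE, E.apply_symm_apply]

theorem coeff_zero_ne_zero_of_dualPoly_eq_self {c : F →+* F} {f : F[X]} (hf : f ≠ 0)
    (hsd : dualPoly c f = f) : f.coeff 0 ≠ 0 := by
  intro h0
  rw [← hsd, dualPoly, h0, map_zero, inv_zero, zero_smul] at hf
  exact hf rfl

namespace AdjoinRoot

theorem root_mul_mk_divX {f : F[X]} (hf : f.coeff 0 ≠ 0) :
    root f * (mk f f.divX * of f (-(f.coeff 0)⁻¹)) = 1 := by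
  have h : root f * mk f f.divX = -of f (f.coeff 0) := by
    rw [eq_neg_iff_add_eq_zero, ← mk_X, ← map_mul, ← mk_C, ← map_add, X_mul_divX_add, mk_self]
  rw [← mul_assoc, h, neg_mul, ← map_mul, mul_neg, mul_inv_cancel₀ hf, map_neg, map_one, neg_neg]

theorem exists_conj_of_dualPoly_eq_self {c : F →+* F} (hc : ∀ x, c (c x) = x) {f : F[X]}
    (hf : f ≠ 0) (hsd : dualPoly c f = f) :
    ∃ conj : AdjoinRoot f →+* AdjoinRoot f, root f * conj (root f) = 1 ∧
      (∀ a, conj (conj a) = a) ∧ ∀ (x : F) a, conj (x • a) = c x • conj a := by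
  have h0 := coeff_zero_ne_zero_of_dualPoly_eq_self hf hsd
  set y := mk f f.divX * of f (-(f.coeff 0)⁻¹)
  have hy : root f * y = 1 := root_mul_mk_divX h0
  let _ : Invertible y := ⟨root f, hy, by rw [mul_comm, hy]⟩
  have hrev : (f.map c).reverse = c (f.coeff 0) • f :=
    (inv_smul_eq_iff₀ (by simpa using h0)).mp hsd
  -- `y = (root f)⁻¹` is a root of `f^c` since `root f` is a root of its reverse `c(f(0)) • f`
  have hfy : eval₂ ((of f).comp c) y f = 0 := by
    rw [← eval₂_map, ← eval₂_reverse_eq_zero_iff, show ⅟y = root f from rfl, hrev, eval₂_smul,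
      eval₂_root, mul_zero]
  set conj := lift ((of f).comp c) y hfy
  have conj_of : ∀ x, conj (of f x) = of f (c x) := fun x => lift_of hfy
  have conj_root : conj (root f) = y := lift_root hfy
  have conj_y : conj y = root f := by
    have h := congr_arg conj hy
    rw [map_mul, map_one, conj_root] at h
    exact (left_inv_eq_right_inv hy h).symm
  have hinv : conj.comp conj = RingHom.id _ :=
    ringHom_ext (RingHom.ext fun x => by simp [conj_of, hc]) (by simp [conj_root, conj_y])
  refine ⟨conj, conj_root ▸ hy, fun a => congr($hinv a), fun x a => ?_⟩
  rw [Algebra.smul_def, Algebra.smul_def, map_mul, algebraMap_eq, conj_of]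

end AdjoinRoot

theorem exists_mul_add_map_mul_ne_zero {c : F →+* F} (hnt : ∃ γ, c γ ≠ γ) {m : F} (hm : m ≠ 0)
    (n : F) : ∃ δ, δ * m + c δ * n ≠ 0 := by
  obtain ⟨γ, hγ⟩ := hnt
  by_contra! h
  have h1 := h 1
  rw [map_one] at h1
  have : (γ - c γ) * m = 0 := by linear_combination h γ - c γ * h1
  exact hm ((mul_eq_zero.mp this).resolve_left (sub_ne_zero.mpr hγ.symm))

theorem exists_dual_map_conj_eq_and_ne_zero {c : F →+* F} (hc : ∀ x, c (c x) = x)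
    (hnt : ∃ γ, c γ ≠ γ) {A : Type*} [Ring A] [Algebra F A] (conj : A →+* A)
    (hconj : ∀ a, conj (conj a) = a) (hsmul : ∀ (x : F) a, conj (x • a) = c x • conj a)
    {s : A} (hs : s ≠ 0) :
    ∃ ℓ : Dual F A, (∀ a, ℓ (conj a) = c (ℓ a)) ∧ ℓ s ≠ 0 := by
  obtain ⟨μ, hμ⟩ := Projective.exists_dual_ne_zero F hs
  obtain ⟨δ, hδ⟩ := exists_mul_add_map_mul_ne_zero hnt hμ (c (μ (conj s)))
  let ℓ : Dual F A :=
    { toFun a := δ * μ a + c δ * c (μ (conj a))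
      map_add' a b := by
        simp only [map_add]
        ring
      map_smul' x a := by
        simp only [hsmul, map_smul, smul_eq_mul, map_mul, hc, RingHom.id_apply]
        ring }
  refine ⟨ℓ, fun a => ?_, hδ⟩
  simp only [ℓ, LinearMap.coe_mk, AddHom.coe_mk, hconj, map_add, map_mul, hc]
  ring

structure IsInvariantSesqForm (c : F →+* F) (T : V →ₗ[F] V) (σ : V → V → F) : Prop where
  add_left : ∀ u v w, σ (u + v) w = σ u w + σ v w
  add_right : ∀ u v w, σ u (v + w) = σ u v + σ u w
  smul_left_smul_right : ∀ (a b : F) v w, σ (a • v) (b • w) = a * c b * σ v w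
  nondegenerate : ∀ v, (∀ w, σ v w = 0) → v = 0
  invariant : ∀ v w, σ (T v) (T w) = σ v w

namespace IsInvariantSesqForm

variable {c : F →+* F} {T : V →ₗ[F] V} {σ : V → V → F}

theorem const_mul (h : IsInvariantSesqForm c T σ) {ω : F} (hω : ω ≠ 0) :
    IsInvariantSesqForm c T fun v w => ω * σ v w where
  add_left u v w := by rw [h.add_left, mul_add]
  add_right u v w := by rw [h.add_right, mul_add]
  smul_left_smul_right a b v w := by rw [h.smul_left_smul_right]; ring
  nondegenerate v hv := h.nondegenerate v fun w => (mul_eq_zero.mp (hv w)).resolve_left hω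
  invariant v w := by rw [h.invariant]

theorem congr {W : Type*} [AddCommGroup W] [Module F W] {S : W →ₗ[F] W} {σ : W → W → F}
    (h : IsInvariantSesqForm c S σ) (Φ : V ≃ₗ[F] W) (hΦ : ∀ v, Φ (T v) = S (Φ v)) :
    IsInvariantSesqForm c T fun v w => σ (Φ v) (Φ w) where
  add_left u v w := by simp only [map_add, h.add_left]
  add_right u v w := by simp only [map_add, h.add_right]
  smul_left_smul_right a b v w := by simp only [map_smul, h.smul_left_smul_right]
  nondegenerate v hv := Φ.map_eq_zero_iff.mp <| h.nondegenerate _ fun w => by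
    simpa using hv (Φ.symm w)
  invariant v w := by simp only [hΦ, h.invariant]

end IsInvariantSesqForm

section

variable {c : F →+* F} {A : Type*} [CommRing A] [Algebra F A] {conj : A →+* A}

theorem isInvariantSesqForm_mul_conj (hconj : ∀ a, conj (conj a) = a)
    (hsmul : ∀ (x : F) a, conj (x • a) = c x • conj a) {t : A} (ht : t * conj t = 1)
    (ℓ : Dual F A) (hℓ : ∀ a ≠ 0, ∃ b, ℓ (a * b) ≠ 0) :
    IsInvariantSesqForm c (LinearMap.mulLeft F t) fun a b => ℓ (a * conj b) where
  add_left a b d := by simp only [add_mul, map_add]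
  add_right a b d := by simp only [map_add, mul_add]
  smul_left_smul_right x y a b := by
    rw [hsmul, smul_mul_smul_comm, map_smul, smul_eq_mul]
  nondegenerate a ha := by
    by_contra h
    obtain ⟨b, hb⟩ := hℓ a h
    exact hb (by simpa [hconj] using ha (conj b))
  invariant a b := by
    simp only [LinearMap.mulLeft_apply, map_mul]
    rw [mul_mul_mul_comm, ht, one_mul]

theorem apply_mul_conj_eq_map_apply (hconj : ∀ a, conj (conj a) = a) {ℓ : Dual F A}
    (hℓ : ∀ a, ℓ (conj a) = c (ℓ a)) (a b : A) : ℓ (a * conj b) = c (ℓ (b * conj a)) := by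
  rw [← hℓ, map_mul conj, hconj, mul_comm]

end

end

theorem cyclic_self_dual_admits_hermitian_and_skew_hermitian_form_general
    {F : Type*} [Field F] (c : F →+* F) (hc : ∀ x, c (c x) = x)
    (hnt : ∃ x : F, c x ≠ x)
    {V : Type*} [AddCommGroup V] [Module F V] [FiniteDimensional F V]
    (hdim : 2 ≤ finrank F V)
    (T : V →ₗ[F] V)
    (p : Polynomial F) (d : ℕ) (hirr : Irreducible p)
    (hchar : LinearMap.charpoly T = p ^ d)
    (hmin : minpoly F T = p ^ d)
    (hsd : dualPoly c (p ^ d) = p ^ d) :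
    (∃ σ : V → V → F,
      (∀ u v w : V, σ (u + v) w = σ u w + σ v w) ∧
      (∀ u v w : V, σ u (v + w) = σ u v + σ u w) ∧
      (∀ (a b : F) (v w : V), σ (a • v) (b • w) = a * c b * σ v w) ∧
      (∀ v w : V, σ v w = c (σ w v)) ∧
      (∀ v : V, (∀ w : V, σ v w = 0) → v = 0) ∧
      (∀ v w : V, σ (T v) (T w) = σ v w)) ∧
    (ringChar F ≠ 2 →
      ∃ σ : V → V → F,
        (∀ u v w : V, σ (u + v) w = σ u w + σ v w) ∧
        (∀ u v w : V, σ u (v + w) = σ u v + σ u w) ∧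
        (∀ (a b : F) (v w : V), σ (a • v) (b • w) = a * c b * σ v w) ∧
        (∀ v w : V, σ v w = - c (σ w v)) ∧
        (∀ v : V, (∀ w : V, σ v w = 0) → v = 0) ∧
        (∀ v w : V, σ (T v) (T w) = σ v w)) := by
  have hp : Prime p := hirr.prime
  have hdeg : (p ^ d).natDegree = finrank F V := hchar ▸ T.charpoly_natDegree
  obtain ⟨n, rfl⟩ : ∃ n, d = n + 1 := Nat.exists_eq_add_one_of_ne_zero <| by
    rintro rfl
    rw [pow_zero, natDegree_one] at hdeg
    omega
  obtain ⟨v, hv⟩ := exists_pow_dvd_of_aeval_apply_eq_zero hp hmin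
  obtain ⟨Ψ, hΨ⟩ := exists_linearEquiv_adjoinRoot T (hmin ▸ minpoly.aeval F T) hdeg hv
  obtain ⟨conj, hroot, hconj, hsmul⟩ :=
    AdjoinRoot.exists_conj_of_dualPoly_eq_self hc (pow_ne_zero _ hp.ne_zero) hsd
  have hs : AdjoinRoot.mk (p ^ (n + 1)) (p ^ n) ≠ 0 := by
    rw [Ne, AdjoinRoot.mk_eq_zero, pow_dvd_pow_iff hp.ne_zero hp.not_isUnit]
    omega
  obtain ⟨ℓ, hℓ, hℓs⟩ := exists_dual_map_conj_eq_and_ne_zero hc hnt conj hconj hsmul hs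
  have hσ := (isInvariantSesqForm_mul_conj hconj hsmul hroot ℓ fun a ha => by
    obtain ⟨b, hb⟩ := AdjoinRoot.exists_mul_eq_mk_pow hp ha
    exact ⟨b, hb ▸ hℓs⟩).congr Ψ hΨ
  have hherm : ∀ v w, ℓ (Ψ v * conj (Ψ w)) = c (ℓ (Ψ w * conj (Ψ v))) := fun v w =>
    apply_mul_conj_eq_map_apply hconj hℓ _ _
  obtain ⟨γ, hγ⟩ := hnt
  have hσ' := hσ.const_mul (sub_ne_zero.mpr hγ.symm)
  refine ⟨⟨_, hσ.add_left, hσ.add_right, hσ.smul_left_smul_right, hherm, hσ.nondegenerate,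
      hσ.invariant⟩,
    fun _ => ⟨_, hσ'.add_left, hσ'.add_right, hσ'.smul_left_smul_right, fun v w => ?_,
      hσ'.nondegenerate, hσ'.invariant⟩⟩
  rw [hherm v w, map_mul c, map_sub c, hc]
  ring

/-- Let `F` be a field with a nontrivial involution `c`, `V` an `F`-vector
space of finite dimension `k ≥ 2`, and `T` invertible, cyclic (charpoly = minpoly = `p^d`),
with `p` monic irreducible, `p ∉ {x, x-1, x+1}`, and `p^d` self-dual. Then `V` admits a
`T`-invariant nondegenerate `c`-hermitian form; and if moreover `char F ≠ 2`, `V` also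
admits a `T`-invariant nondegenerate `c`-skew-hermitian form. -/
theorem cyclic_self_dual_admits_hermitian_and_skew_hermitian_form
    {F : Type*} [Field F] (c : F →+* F) (hc : ∀ x, c (c x) = x)
    (hnt : ∃ x : F, c x ≠ x)
    {V : Type*} [AddCommGroup V] [Module F V] [FiniteDimensional F V]
    (hdim : 2 ≤ finrank F V)
    (T : V →ₗ[F] V) (hT : Function.Bijective T)
    (p : Polynomial F) (d : ℕ) (hmonic : p.Monic) (hirr : Irreducible p)
    (hpX : p ≠ X) (hpXm : p ≠ X - 1) (hpXp : p ≠ X + 1)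
    (hchar : LinearMap.charpoly T = p ^ d)
    (hmin : minpoly F T = p ^ d)
    (hsd : dualPoly c (p ^ d) = p ^ d) :
    (∃ σ : V → V → F,
      (∀ u v w : V, σ (u + v) w = σ u w + σ v w) ∧
      (∀ u v w : V, σ u (v + w) = σ u v + σ u w) ∧
      (∀ (a b : F) (v w : V), σ (a • v) (b • w) = a * c b * σ v w) ∧
      (∀ v w : V, σ v w = c (σ w v)) ∧
      (∀ v : V, (∀ w : V, σ v w = 0) → v = 0) ∧
      (∀ v w : V, σ (T v) (T w) = σ v w)) ∧
    (ringChar F ≠ 2 →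
      ∃ σ : V → V → F,
        (∀ u v w : V, σ (u + v) w = σ u w + σ v w) ∧
        (∀ u v w : V, σ u (v + w) = σ u v + σ u w) ∧
        (∀ (a b : F) (v w : V), σ (a • v) (b • w) = a * c b * σ v w) ∧
        (∀ v w : V, σ v w = - c (σ w v)) ∧
        (∀ v : V, (∀ w : V, σ v w = 0) → v = 0) ∧
        (∀ v w : V, σ (T v) (T w) = σ v w)) :=
  cyclic_self_dual_admits_hermitian_and_skew_hermitian_form_general c hc hnt hdim T p d hirr hchar
    hmin hsd
end

section
/- Let F be a field of characteristic 2 with a nontrivial involution c, and let n ≥ 2. Let J_n ∈ M_n(F) be the unipotent lower Jordan block. Then there exists an invertible c-hermitian matrix H ∈ M_n(F) with J_n^t H J_n = H; that is, the vector space F^n admits a J_n-invariant nondegenerate c-hermitian form (note (J_n)^c = J_n since its entries are 0 and 1). -/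
/-!
Write `K` for the `n × n` matrix with entries `C(n - i, j + 1)`. Conjugating by the Jordan block
adds to `K i j` the three neighbours `K (i+1) j + K i (j+1) + K (i+1) (j+1)`, which by Pascal's rule
is twice `C(n-i-1, j+1) + C(n-i-1, j+2)`, hence zero in characteristic 2; so `Jᵀ K J = K`, and
also `Jᵀ Kᵀ J = Kᵀ`. The matrix `K` vanishes below the antidiagonal and is `1` on it. Pick `l` with
`l + c l = 1` (e.g. `l = δ / (δ + c δ)` for any `δ` not fixed by `c`); then `H = l K + (c l) Kᵀ`
is `c`-hermitian, `J`-invariant, and antitriangular with `1` on the antidiagonal, so invertible.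
-/

open Matrix

theorem sum_range_ite_eq_or_eq_add_one {M : Type*} [AddCommMonoid M] {n : ℕ} (v : ℕ → M)
    (hv : v n = 0) {j : ℕ} (hj : j < n) :
    ∑ b ∈ Finset.range n, (if b = j ∨ b = j + 1 then v b else 0) = v j + v (j + 1) := by
  rw [Finset.sum_eq_add j (j + 1) (by omega)]
  · simp
  · intro b _ hb
    simp [hb.1, hb.2]
  · simp [hj]
  · intro hj'
    rw [show j + 1 = n by simp at hj'; omega, hv, if_pos (Or.inr rfl)]

theorem exists_add_map_eq_one_of_add_map_ne_zero {F : Type*} [Field F] (c : F →+* F)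
    (hc : ∀ x, c (c x) = x) {δ : F} (hδ : δ + c δ ≠ 0) : ∃ l, l + c l = 1 :=
  ⟨δ / (δ + c δ), by rw [map_div₀, map_add, hc, add_comm (c δ) δ, ← add_div, div_self hδ]⟩

namespace Matrix

variable {R : Type*}

def lowerJordanBlock (R : Type*) [Zero R] [One R] (n : ℕ) : Matrix (Fin n) (Fin n) R :=
  of fun i j => if (i : ℕ) = (j : ℕ) then 1 else if (i : ℕ) = (j : ℕ) + 1 then 1 else 0

section LowerJordanBlock

variable [Semiring R] {n : ℕ}

theorem sum_lowerJordanBlock_mul (v : ℕ → R) (hv : v n = 0) (j : Fin n) :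
    ∑ b : Fin n, lowerJordanBlock R n b j * v b = v j + v (j + 1) := by
  rw [← sum_range_ite_eq_or_eq_add_one v hv j.isLt,
    ← Fin.sum_univ_eq_sum_range (fun b => if b = j ∨ b = j + 1 then v b else 0)]
  refine Finset.sum_congr rfl fun b _ => ?_
  simp only [lowerJordanBlock, of_apply]
  split_ifs <;> simp_all

theorem sum_mul_lowerJordanBlock (v : ℕ → R) (hv : v n = 0) (j : Fin n) :
    ∑ b : Fin n, v b * lowerJordanBlock R n b j = v j + v (j + 1) := by
  rw [← sum_range_ite_eq_or_eq_add_one v hv j.isLt,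
    ← Fin.sum_univ_eq_sum_range (fun b => if b = j ∨ b = j + 1 then v b else 0)]
  refine Finset.sum_congr rfl fun b _ => ?_
  simp only [lowerJordanBlock, of_apply]
  split_ifs <;> simp_all

theorem lowerJordanBlock_transpose_mul_of_mul_apply (f : ℕ → ℕ → R) (hrow : ∀ b, f n b = 0)
    (hcol : ∀ a, f a n = 0) (i j : Fin n) :
    ((lowerJordanBlock R n)ᵀ * of (fun a b : Fin n => f a b) * lowerJordanBlock R n) i j =
      f i j + f (i + 1) j + (f i (j + 1) + f (i + 1) (j + 1)) := by
  simp only [mul_apply, transpose_apply, of_apply]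
  rw [sum_mul_lowerJordanBlock (fun b => ∑ a : Fin n, lowerJordanBlock R n a i * f a b)
    (by simp [hcol]), sum_lowerJordanBlock_mul (f · j) (hrow _),
    sum_lowerJordanBlock_mul (f · (j + 1)) (hrow _)]

end LowerJordanBlock

/-- The rows of the Pascal matrix `(C(a + 1, b + 1))` in reverse order. The shift by one makes the
formula vanish at the phantom row `i = n`, where `n - i` truncates to `0`. -/
def reversePascal (R : Type*) [NatCast R] (n : ℕ) : Matrix (Fin n) (Fin n) R :=
  of fun i j => ((n - i).choose (j + 1) : R)

section ReversePascal

variable {n : ℕ}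

theorem reversePascal_apply_eq_zero [AddMonoidWithOne R] {i j : Fin n} (h : n ≤ i + j) :
    reversePascal R n i j = 0 := by
  simp [reversePascal, Nat.choose_eq_zero_of_lt (show n - i < j + 1 by omega)]

theorem reversePascal_rev_apply_self [AddMonoidWithOne R] (i : Fin n) :
    reversePascal R n i.rev i = 1 := by
  simp [reversePascal, show n - (n - (i + 1)) = i + 1 by omega]

theorem reversePascal_apply_rev_self [AddMonoidWithOne R] (i : Fin n) :
    reversePascal R n i i.rev = 1 := by
  simpa using reversePascal_rev_apply_self (R := R) i.rev

theorem lowerJordanBlock_transpose_mul_reversePascal_mul [Ring R] [CharP R 2] :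
    (lowerJordanBlock R n)ᵀ * reversePascal R n * lowerJordanBlock R n = reversePascal R n := by
  ext i j
  rw [reversePascal,
    lowerJordanBlock_transpose_mul_of_mul_apply (fun a b => ((n - a).choose (b + 1) : R))
      (by simp) (fun a => by simp [Nat.choose_eq_zero_of_lt (show n - a < n + 1 by omega)]),
    of_apply]
  obtain ⟨m, hm⟩ : ∃ m, n - i = m + 1 := ⟨n - (i + 1), by omega⟩
  rw [show n - (i + 1) = m by omega, hm, Nat.choose_succ_succ' m (j + 1)]
  push_cast
  simp only [add_assoc, CharTwo.add_self_eq_zero, add_zero]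

theorem lowerJordanBlock_transpose_mul_reversePascal_transpose_mul [CommRing R] [CharP R 2] :
    (lowerJordanBlock R n)ᵀ * (reversePascal R n)ᵀ * lowerJordanBlock R n =
      (reversePascal R n)ᵀ := by
  simpa [transpose_mul, mul_assoc] using
    congr_arg transpose (lowerJordanBlock_transpose_mul_reversePascal_mul (R := R) (n := n))

end ReversePascal

theorem isUnit_of_antitriangular [CommRing R] {n : ℕ} {M : Matrix (Fin n) (Fin n) R}
    (hzero : ∀ i j : Fin n, n ≤ i + j → M i j = 0) (hone : ∀ i, M i.rev i = 1) : IsUnit M := by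
  have hdet : (M.submatrix Fin.revPerm id).det = 1 := by
    rw [det_of_isLowerTriangular]
    · simp [hone]
    · intro i j hij
      exact hzero _ _ (by simp at hij ⊢; omega)
  rw [det_permute] at hdet
  exact (isUnit_iff_isUnit_det M).mpr (IsUnit.of_mul_eq_one_right _ hdet)

end Matrix

theorem jordan_block_invariant_hermitian_form_char_two_general
    {F : Type*} [Field F] [CharP F 2] (c : F →+* F) (hc : ∀ x, c (c x) = x)
    (hnt : ∃ x : F, c x ≠ x) (n : ℕ)
    (J : Matrix (Fin n) (Fin n) F)
    (hJ : ∀ i j : Fin n, J i j =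
      if (i : ℕ) = (j : ℕ) then 1 else if (i : ℕ) = (j : ℕ) + 1 then 1 else 0) :
    ∃ H : Matrix (Fin n) (Fin n) F, IsUnit H ∧ Hᵀ = H.map c ∧ Jᵀ * H * J = H := by
  obtain ⟨δ, hδ⟩ := hnt
  obtain ⟨l, hl⟩ := exists_add_map_eq_one_of_add_map_ne_zero c hc
    (mt CharTwo.add_eq_zero.mp (Ne.symm hδ))
  obtain rfl : J = lowerJordanBlock F n := ext hJ
  refine ⟨l • reversePascal F n + c l • (reversePascal F n)ᵀ,
    isUnit_of_antitriangular (fun i j h => ?_) (fun i => ?_), ?_, ?_⟩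
  · simp [reversePascal_apply_eq_zero h, reversePascal_apply_eq_zero (add_comm (i : ℕ) j ▸ h)]
  · simpa [reversePascal_rev_apply_self, reversePascal_apply_rev_self] using hl
  · ext i j
    simp [reversePascal, hc, add_comm]
  · simp only [Matrix.mul_add, Matrix.add_mul, Matrix.mul_smul, Matrix.smul_mul,
      lowerJordanBlock_transpose_mul_reversePascal_mul,
      lowerJordanBlock_transpose_mul_reversePascal_transpose_mul]

/-- Let `F` be a field of characteristic 2 with a nontrivial involution `c`,
`n ≥ 2`, and let `J` be the unipotent lower Jordan block of size `n`. Then there exists an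
invertible `c`-hermitian matrix `H` with `Jᵀ * H * J = H`. -/
theorem jordan_block_invariant_hermitian_form_char_two
    {F : Type*} [Field F] [CharP F 2] (c : F →+* F) (hc : ∀ x, c (c x) = x)
    (hnt : ∃ x : F, c x ≠ x) (n : ℕ) (hn : 2 ≤ n)
    (J : Matrix (Fin n) (Fin n) F)
    (hJ : ∀ i j : Fin n, J i j =
      if (i : ℕ) = (j : ℕ) then 1 else if (i : ℕ) = (j : ℕ) + 1 then 1 else 0) :
    ∃ H : Matrix (Fin n) (Fin n) F, IsUnit H ∧ Hᵀ = H.map c ∧ Jᵀ * H * J = H :=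
  jordan_block_invariant_hermitian_form_char_two_general c hc hnt n J hJ
end

section
/- Let F be a field with an involution c, and let f(x) = x^k + d_{k−1}x^{k−1} + ⋯ + d_1 x + d_0 be a monic self-dual polynomial of degree k ≥ 2 over F with d_0 ≠ 0 (so d_0 c(d_0) = 1 and d_i c(d_0) = c(d_{k−i}) for 1 ≤ i ≤ k−1). Let C ∈ M_k(F) be the companion matrix of f and let S ∈ M_k(F) be the reversal permutation matrix, S_{ij} = 1 if i + j = k + 1 and S_{ij} = 0 otherwise. Then S^2 = I and S C S^{-1} = (C^c)^{-1}; in particular the companion matrix of a self-dual polynomial is strongly c-real. -/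
/-!
The reversal permutation matrix `S` is an involution, and `S * A * S` is `A` read backwards in
both indices. The reversed companion matrix of `f` is the inverse of the companion matrix of the
reciprocal polynomial `g = f(0)⁻¹ xᵏ f(1/x)`: an entrywise check needing only
`g(i) f(0) = f(k - i)`. For involutive `c`, self-duality of `f` says precisely that `f^c = g`.
-/

open Matrix Polynomial

noncomputable def reciprocal {F : Type*} [Field F] (f : F[X]) : F[X] :=
  (f.coeff 0)⁻¹ • f.reverse

theorem coeff_reciprocal {F : Type*} [Field F] (f : F[X]) {i : ℕ} (hi : i ≤ f.natDegree) :
    (reciprocal f).coeff i = (f.coeff 0)⁻¹ * f.coeff (f.natDegree - i) := by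
  rw [reciprocal, coeff_smul, coeff_reverse, revAt_le hi, smul_eq_mul]

theorem map_eq_reciprocal_of_dualPoly_eq_self {F : Type*} [Field F] {c : F →+* F}
    (hc : ∀ x, c (c x) = x) {f : F[X]} (hf : dualPoly c f = f) : f.map c = reciprocal f := by
  have hcc : c.comp c = RingHom.id F := RingHom.ext hc
  conv_lhs => rw [← hf]
  unfold dualPoly reciprocal Polynomial.reverse
  rw [Polynomial.map_smul, map_inv₀, hc, natDegree_map, ← reflect_map, Polynomial.map_map, hcc,
    Polynomial.map_id]

theorem permMatrix_revPerm_apply (R : Type*) [Zero R] [One R] {k : ℕ} (i j : Fin k) :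
    Fin.revPerm.permMatrix R i j = if (i : ℕ) + j = k - 1 then 1 else 0 := by
  have hij : Fin.rev i = j ↔ (i : ℕ) + j = k - 1 := by
    rw [Fin.ext_iff, Fin.val_rev]
    omega
  simp only [PEquiv.toMatrix_apply, Equiv.toPEquiv_apply, Option.mem_def, Option.some_inj,
    Fin.revPerm_apply, hij]

theorem permMatrix_revPerm_mul_self (R : Type*) [NonAssocSemiring R] (k : ℕ) :
    (Fin.revPerm.permMatrix R : Matrix (Fin k) (Fin k) R) * Fin.revPerm.permMatrix R = 1 := by
  rw [PEquiv.toMatrix_toPEquiv_mul]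
  ext i j
  simp [PEquiv.toMatrix_apply, one_apply]

theorem permMatrix_revPerm_mul_mul_self {R : Type*} [NonAssocSemiring R] {k : ℕ}
    (A : Matrix (Fin k) (Fin k) R) :
    Fin.revPerm.permMatrix R * A * Fin.revPerm.permMatrix R = A.submatrix Fin.rev Fin.rev := by
  rw [PEquiv.toMatrix_toPEquiv_mul, PEquiv.mul_toMatrix_toPEquiv]
  rfl

def companion {R : Type*} [Ring R] (k : ℕ) (f : R[X]) : Matrix (Fin k) (Fin k) R :=
  of fun i j => if (j : ℕ) = k - 1 then -f.coeff i else if (i : ℕ) = j + 1 then 1 else 0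

section Companion

variable {R : Type*} [Ring R] {n : ℕ} (f : R[X])

theorem companion_map {S : Type*} [Ring S] (φ : R →+* S) (k : ℕ) :
    (companion k f).map φ = companion k (f.map φ) := by
  ext i j
  simp only [companion, map_apply, of_apply, coeff_map]
  split_ifs <;> simp

theorem companion_apply_last (i : Fin (n + 1)) :
    companion (n + 1) f i (Fin.last n) = -f.coeff i := by
  simp [companion]

theorem companion_apply_castSucc (i : Fin (n + 1)) (l : Fin n) :
    companion (n + 1) f i l.castSucc = if i = l.succ then 1 else 0 := by
  simp [companion, l.isLt.ne, Fin.ext_iff]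

theorem companion_submatrix_rev_apply (i j : Fin (n + 1)) :
    (companion (n + 1) f).submatrix Fin.rev Fin.rev i j =
      if j = 0 then -f.coeff (n - i) else if (j : ℕ) = i + 1 then 1 else 0 := by
  have hj : (j.rev : ℕ) = n + 1 - 1 ↔ j = 0 := by
    rw [Fin.val_rev, ← Fin.val_eq_zero_iff]
    omega
  have hij : (i.rev : ℕ) = j.rev + 1 ↔ (j : ℕ) = i + 1 := by simp only [Fin.val_rev]; omega
  simp only [companion, submatrix_apply, of_apply, hj, hij]
  rw [Fin.val_rev, Nat.add_sub_add_right]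

theorem companion_submatrix_rev_last (j : Fin (n + 1)) :
    (companion (n + 1) f).submatrix Fin.rev Fin.rev (Fin.last n) j =
      if j = 0 then -f.coeff 0 else 0 := by
  rw [companion_submatrix_rev_apply, Fin.val_last, Nat.sub_self, if_neg j.isLt.ne]

theorem companion_submatrix_rev_castSucc (l : Fin n) (j : Fin (n + 1)) :
    (companion (n + 1) f).submatrix Fin.rev Fin.rev l.castSucc j =
      if j = 0 then -f.coeff (n - l) else if j = l.succ then 1 else 0 := by
  have hj : (j : ℕ) = l + 1 ↔ j = l.succ := by rw [Fin.ext_iff, Fin.val_succ]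
  simp only [companion_submatrix_rev_apply, Fin.val_castSucc, hj]

end Companion

theorem companion_mul_companion_submatrix_rev {R : Type*} [CommRing R] (n : ℕ) {f g : R[X]}
    (hf : f.coeff (n + 1) = 1) (hgf : ∀ i ≤ n, g.coeff i * f.coeff 0 = f.coeff (n + 1 - i)) :
    companion (n + 1) g * (companion (n + 1) f).submatrix Fin.rev Fin.rev = 1 := by
  ext i j
  rw [mul_apply, Fin.sum_univ_castSucc, companion_apply_last, companion_submatrix_rev_last]
  simp only [companion_apply_castSucc, ite_mul, one_mul, zero_mul]
  induction i using Fin.cases with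
  | zero =>
    simp only [(Fin.succ_ne_zero _).symm, if_false, Finset.sum_const_zero, zero_add]
    rcases eq_or_ne j 0 with rfl | hj
    · rw [if_pos rfl, neg_mul_neg, Fin.val_zero, hgf 0 n.zero_le, Nat.sub_zero, hf, one_apply_eq]
    · rw [if_neg hj, mul_zero, one_apply_ne hj.symm]
  | succ i =>
    simp only [Fin.succ_inj, Finset.sum_ite_eq, Finset.mem_univ, if_true,
      companion_submatrix_rev_castSucc]
    rcases eq_or_ne j 0 with rfl | hj
    · rw [if_pos rfl, if_pos rfl, neg_mul_neg, Fin.val_succ, hgf _ i.isLt, Nat.add_sub_add_right,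
        neg_add_cancel, one_apply_ne (Fin.succ_ne_zero i)]
    · simp only [if_neg hj, mul_zero, add_zero, one_apply, eq_comm]

theorem companion_reciprocal_mul_companion_submatrix_rev {F : Type*} [Field F] {k : ℕ}
    {f : F[X]} (hmonic : f.Monic) (hdeg : f.natDegree = k) (h0 : f.coeff 0 ≠ 0) :
    companion k (reciprocal f) * (companion k f).submatrix Fin.rev Fin.rev = 1 := by
  cases k with
  | zero => exact Subsingleton.elim _ _
  | succ n =>
    refine companion_mul_companion_submatrix_rev n (hdeg ▸ hmonic.coeff_natDegree) fun i hi => ?_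
    rw [coeff_reciprocal f (by omega), hdeg, mul_comm, mul_inv_cancel_left₀ h0]

theorem companion_of_self_dual_strongly_c_real_general
    {F : Type*} [Field F] (c : F →+* F) (hc : ∀ x, c (c x) = x)
    (k : ℕ)
    (f : Polynomial F) (hmonic : f.Monic) (hdeg : f.natDegree = k)
    (h0 : f.coeff 0 ≠ 0) (hsd : dualPoly c f = f)
    (C S : Matrix (Fin k) (Fin k) F)
    (hC : ∀ i j : Fin k, C i j =
      if (j : ℕ) = k - 1 then -f.coeff i else if (i : ℕ) = (j : ℕ) + 1 then 1 else 0)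
    (hS : ∀ i j : Fin k, S i j = if (i : ℕ) + (j : ℕ) = k - 1 then 1 else 0) :
    S * S = 1 ∧ S * C * S⁻¹ = (C.map c)⁻¹ := by
  have hS : S = Fin.revPerm.permMatrix F := by
    ext i j
    rw [hS, permMatrix_revPerm_apply]
  have hC : C = companion k f := Matrix.ext hC
  have hSS : S * S = 1 := hS ▸ permMatrix_revPerm_mul_self F k
  refine ⟨hSS, ?_⟩
  rw [inv_eq_right_inv hSS, hS, permMatrix_revPerm_mul_mul_self, hC, companion_map,
    map_eq_reciprocal_of_dualPoly_eq_self hc hsd]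
  exact (inv_eq_right_inv (companion_reciprocal_mul_companion_submatrix_rev hmonic hdeg h0)).symm

/-- Let `F` be a field with an involution `c` and let `f` be a monic self-dual
polynomial of degree `k ≥ 2` with `f(0) ≠ 0`. Let `C` be the companion matrix of `f` and
`S` the reversal permutation matrix. Then `S^2 = 1` and `S * C * S⁻¹ = (C^c)⁻¹`; in
particular the companion matrix of a self-dual polynomial is strongly `c`-real. -/
theorem companion_of_self_dual_strongly_c_real
    {F : Type*} [Field F] (c : F →+* F) (hc : ∀ x, c (c x) = x)
    (k : ℕ) (hk : 2 ≤ k)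
    (f : Polynomial F) (hmonic : f.Monic) (hdeg : f.natDegree = k)
    (h0 : f.coeff 0 ≠ 0) (hsd : dualPoly c f = f)
    (C S : Matrix (Fin k) (Fin k) F)
    (hC : ∀ i j : Fin k, C i j =
      if (j : ℕ) = k - 1 then -f.coeff i else if (i : ℕ) = (j : ℕ) + 1 then 1 else 0)
    (hS : ∀ i j : Fin k, S i j = if (i : ℕ) + (j : ℕ) = k - 1 then 1 else 0) :
    S * S = 1 ∧ S * C * S⁻¹ = (C.map c)⁻¹ :=
  companion_of_self_dual_strongly_c_real_general c hc k f hmonic hdeg h0 hsd C S hC hS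
end

section
/- Let F be a field with an involution c, let f be a monic polynomial of degree k ≥ 2 over F with f(0) ≠ 0, and let C ∈ M_k(F) be the companion matrix of f. If H ∈ M_k(F) satisfies (C^c)^t H C = H, then H is a Toeplitz matrix: H_{i+1,j+1} = H_{i,j} for all 1 ≤ i, j ≤ k−1. -/
/-!
For `j < k - 1` the `j`-th column of the companion matrix is the standard basis vector
`e_{j+1}`, and it stays so after applying `c`. Hence the `(i, j)` entry of `(C^c)ᵀ H C` is
`e_{i+1}ᵀ H e_{j+1} = H_{i+1, j+1}`, and invariance of `H` gives `H_{i+1, j+1} = H_{i, j}`.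
-/

open Matrix Polynomial

theorem transpose_map_eq_single_of_transpose_eq_single {R m : Type*} [Semiring R]
    [DecidableEq m] (c : R →+* R) {A : Matrix m m R} {i p : m}
    (hA : Aᵀ i = Pi.single p 1) : (A.map c)ᵀ i = Pi.single p 1 := by
  ext r
  rw [transpose_apply, map_apply, ← transpose_apply A, hA]
  by_cases hr : r = p
  · subst hr; simp
  · simp [hr]

theorem transpose_map_mul_mul_apply_of_transpose_eq_single {R m n : Type*} [Semiring R]
    [Fintype m] [Fintype n] [DecidableEq m] [DecidableEq n] (c : R →+* R)
    {A : Matrix m m R} {B : Matrix n n R} (H : Matrix m n R) {i p : m} {j q : n}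
    (hA : Aᵀ i = Pi.single p 1) (hB : Bᵀ j = Pi.single q 1) :
    ((A.map c)ᵀ * H * B) i j = H p q := by
  rw [mul_apply', show (fun r => B r j) = Pi.single q 1 from hB, dotProduct_single, mul_one,
    mul_apply', transpose_map_eq_single_of_transpose_eq_single c hA, single_dotProduct, one_mul]

theorem companion_transpose_eq_single {R : Type*} [Ring R] {k : ℕ} (f : R[X])
    {C : Matrix (Fin k) (Fin k) R}
    (hC : ∀ i j : Fin k, C i j =
      if (j : ℕ) = k - 1 then -f.coeff i else if (i : ℕ) = (j : ℕ) + 1 then 1 else 0)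
    (j : Fin k) (hj : (j : ℕ) + 1 < k) : Cᵀ j = Pi.single ⟨(j : ℕ) + 1, hj⟩ 1 := by
  ext p
  rw [transpose_apply, hC, if_neg (by omega), Pi.single_apply]
  simp only [Fin.ext_iff]

theorem invariant_form_of_companion_is_toeplitz_general
    {F : Type*} [Field F] (c : F →+* F)
    (k : ℕ)
    (f : Polynomial F)
    (C : Matrix (Fin k) (Fin k) F)
    (hC : ∀ i j : Fin k, C i j =
      if (j : ℕ) = k - 1 then -f.coeff i else if (i : ℕ) = (j : ℕ) + 1 then 1 else 0)
    (H : Matrix (Fin k) (Fin k) F)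
    (hH : (C.map c)ᵀ * H * C = H) :
    ∀ (i j : Fin k) (hi : (i : ℕ) + 1 < k) (hj : (j : ℕ) + 1 < k),
      H ⟨(i : ℕ) + 1, hi⟩ ⟨(j : ℕ) + 1, hj⟩ = H i j := by
  intro i j hi hj
  rw [← transpose_map_mul_mul_apply_of_transpose_eq_single c H
    (companion_transpose_eq_single f hC i hi) (companion_transpose_eq_single f hC j hj), hH]

/-- Let `F` be a field with an involution `c`, `f` a monic polynomial of
degree `k ≥ 2` with `f(0) ≠ 0`, and `C` the companion matrix of `f`. If `H` satisfies
`(C^c)ᵀ * H * C = H`, then `H` is a Toeplitz matrix: `H_{i+1,j+1} = H_{i,j}`. -/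
theorem invariant_form_of_companion_is_toeplitz
    {F : Type*} [Field F] (c : F →+* F) (hc : ∀ x, c (c x) = x)
    (k : ℕ) (hk : 2 ≤ k)
    (f : Polynomial F) (hmonic : f.Monic) (hdeg : f.natDegree = k) (h0 : f.coeff 0 ≠ 0)
    (C : Matrix (Fin k) (Fin k) F)
    (hC : ∀ i j : Fin k, C i j =
      if (j : ℕ) = k - 1 then -f.coeff i else if (i : ℕ) = (j : ℕ) + 1 then 1 else 0)
    (H : Matrix (Fin k) (Fin k) F)
    (hH : (C.map c)ᵀ * H * C = H) :
    ∀ (i j : Fin k) (hi : (i : ℕ) + 1 < k) (hj : (j : ℕ) + 1 < k),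
      H ⟨(i : ℕ) + 1, hi⟩ ⟨(j : ℕ) + 1, hj⟩ = H i j :=
  invariant_form_of_companion_is_toeplitz_general c k f C hC H hH
end

section
/- Let F be a field of characteristic 2 with an involution c, let n ≥ 2, and let J_n ∈ M_n(F) be the unipotent lower Jordan block. If H ∈ M_n(F) satisfies J_n^t H J_n = H, then: (a) H_{i,j+1} + H_{i+1,j} + H_{i+1,j+1} = 0 for all 1 ≤ i, j ≤ n−1, and (b) H_{ij} = 0 whenever i + j ≥ n + 2; in particular H is anti-lower-triangular. -/
open Matrix

/-!
Write `J = 1 + S` with `S` the lower shift matrix and extend `H` by zero to an array on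
`ℕ × ℕ`. Then `Sᵀ` and `S` shift the indices of `H` by one, so `Jᵀ H J = H` says exactly that
`H i (j+1) + H (i+1) j + H (i+1) (j+1) = 0` for all `i, j`. Since the extended array
vanishes in row `n`, this recurrence clears every entry on or below the anti-diagonal `i + j = n`,
row by row from the bottom.
-/

theorem eq_zero_of_le_add_of_recurrence {M : Type*} [AddMonoid M] {n : ℕ} (f : ℕ → ℕ → M)
    (hf : ∀ i j, n ≤ i → f i j = 0)
    (hrec : ∀ i j, f i (j + 1) + f (i + 1) j + f (i + 1) (j + 1) = 0)
    {i j : ℕ} (h : n ≤ i + j) : f i j = 0 := by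
  induction hk : n - i generalizing i j with
  | zero => exact hf i j (by omega)
  | succ k ih =>
    obtain ⟨j, rfl⟩ : ∃ j', j = j' + 1 := ⟨j - 1, by omega⟩
    have hrec_ij := hrec i j
    rwa [ih (i := i + 1) (j := j) (by omega) (by omega),
      ih (i := i + 1) (j := j + 1) (by omega) (by omega),
      add_zero, add_zero] at hrec_ij

theorem Fin.sum_ite_val_eq {M : Type*} [AddCommMonoid M] {n : ℕ} (v : Fin n → M) (a : ℕ) :
    ∑ k : Fin n, (if (k : ℕ) = a then v k else 0) = if h : a < n then v ⟨a, h⟩ else 0 := by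
  split_ifs with h
  · simp [← Fin.ext_iff (b := ⟨a, h⟩)]
  · exact Finset.sum_eq_zero fun k _ => if_neg (by omega)

namespace Matrix

variable {R : Type*}

def extendByZero [Zero R] {m n : ℕ} (A : Matrix (Fin m) (Fin n) R) (i j : ℕ) : R :=
  if h : i < m ∧ j < n then A ⟨i, h.1⟩ ⟨j, h.2⟩ else 0

section ExtendByZero

variable [Zero R] {m n : ℕ}

theorem extendByZero_of_lt (A : Matrix (Fin m) (Fin n) R) {i j : ℕ} (hi : i < m) (hj : j < n) :
    extendByZero A i j = A ⟨i, hi⟩ ⟨j, hj⟩ :=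
  dif_pos ⟨hi, hj⟩

@[simp]
theorem extendByZero_val (A : Matrix (Fin m) (Fin n) R) (i : Fin m) (j : Fin n) :
    extendByZero A i j = A i j :=
  extendByZero_of_lt A i.isLt j.isLt

theorem extendByZero_of_le_left (A : Matrix (Fin m) (Fin n) R) {i : ℕ} (hi : m ≤ i) (j : ℕ) :
    extendByZero A i j = 0 :=
  dif_neg fun h => by omega

theorem extendByZero_of_le_right (A : Matrix (Fin m) (Fin n) R) (i : ℕ) {j : ℕ} (hj : n ≤ j) :
    extendByZero A i j = 0 :=
  dif_neg fun h => by omega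

end ExtendByZero

theorem extendByZero_add [AddZeroClass R] {m n : ℕ} (A B : Matrix (Fin m) (Fin n) R) (i j : ℕ) :
    extendByZero (A + B) i j = extendByZero A i j + extendByZero B i j := by
  unfold extendByZero
  split_ifs <;> simp

def lowerShift (R : Type*) [Zero R] [One R] (n : ℕ) : Matrix (Fin n) (Fin n) R :=
  of fun i j => if (i : ℕ) = j + 1 then 1 else 0

section LowerShift

variable [NonAssocSemiring R] {n : ℕ}

theorem extendByZero_lowerShift_transpose_mul {p : ℕ} (A : Matrix (Fin n) (Fin p) R)
    (i j : ℕ) : extendByZero ((lowerShift R n)ᵀ * A) i j = extendByZero A (i + 1) j := by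
  by_cases h : i < n ∧ j < p
  · simp [mul_apply, lowerShift, Fin.sum_ite_val_eq, extendByZero, h.1, h.2]
  · rcases not_and_or.mp h with hi | hj
    · rw [extendByZero_of_le_left _ (by omega), extendByZero_of_le_left _ (by omega)]
    · rw [extendByZero_of_le_right _ _ (by omega), extendByZero_of_le_right _ _ (by omega)]

theorem extendByZero_mul_lowerShift {m : ℕ} (A : Matrix (Fin m) (Fin n) R) (i j : ℕ) :
    extendByZero (A * lowerShift R n) i j = extendByZero A i (j + 1) := by
  by_cases h : i < m ∧ j < n
  · simp [mul_apply, lowerShift, Fin.sum_ite_val_eq, extendByZero, h.1, h.2]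
  · rcases not_and_or.mp h with hi | hj
    · rw [extendByZero_of_le_left _ (by omega), extendByZero_of_le_left _ (by omega)]
    · rw [extendByZero_of_le_right _ _ (by omega), extendByZero_of_le_right _ _ (by omega)]

theorem one_add_lowerShift_apply (i j : Fin n) :
    (1 + lowerShift R n) i j =
      if (i : ℕ) = (j : ℕ) then 1 else if (i : ℕ) = (j : ℕ) + 1 then 1 else 0 := by
  simp only [Matrix.add_apply, one_apply, lowerShift, of_apply, Fin.ext_iff]
  split_ifs <;> first | omega | simp

end LowerShift

theorem extendByZero_conj_one_add_lowerShift [Ring R] {n : ℕ} (H : Matrix (Fin n) (Fin n) R)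
    (i j : ℕ) :
    extendByZero ((1 + lowerShift R n)ᵀ * H * (1 + lowerShift R n)) i j =
      extendByZero H i j + (extendByZero H i (j + 1) + extendByZero H (i + 1) j
        + extendByZero H (i + 1) (j + 1)) := by
  have expand : (1 + lowerShift R n)ᵀ * H * (1 + lowerShift R n) =
      H + (H * lowerShift R n + (lowerShift R n)ᵀ * H
        + (lowerShift R n)ᵀ * H * lowerShift R n) := by
    rw [transpose_add, transpose_one]
    noncomm_ring
  simp only [expand, extendByZero_add, extendByZero_mul_lowerShift,
    extendByZero_lowerShift_transpose_mul]

theorem extendByZero_recurrence_of_conj_eq [Ring R] {n : ℕ} {H : Matrix (Fin n) (Fin n) R}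
    (hH : (1 + lowerShift R n)ᵀ * H * (1 + lowerShift R n) = H) (i j : ℕ) :
    extendByZero H i (j + 1) + extendByZero H (i + 1) j + extendByZero H (i + 1) (j + 1) = 0 := by
  have entry := extendByZero_conj_one_add_lowerShift H i j
  rw [hH] at entry
  exact add_eq_left.mp entry.symm

end Matrix

theorem invariant_form_of_jordan_block_char_two_general
    {F : Type*} [Field F]
    (n : ℕ)
    (J : Matrix (Fin n) (Fin n) F)
    (hJ : ∀ i j : Fin n, J i j =
      if (i : ℕ) = (j : ℕ) then 1 else if (i : ℕ) = (j : ℕ) + 1 then 1 else 0)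
    (H : Matrix (Fin n) (Fin n) F)
    (hH : Jᵀ * H * J = H) :
    (∀ (i j : Fin n) (hi : (i : ℕ) + 1 < n) (hj : (j : ℕ) + 1 < n),
      H i ⟨(j : ℕ) + 1, hj⟩ + H ⟨(i : ℕ) + 1, hi⟩ j
        + H ⟨(i : ℕ) + 1, hi⟩ ⟨(j : ℕ) + 1, hj⟩ = 0) ∧
    (∀ i j : Fin n, n ≤ (i : ℕ) + (j : ℕ) → H i j = 0) := by
  obtain rfl : J = 1 + lowerShift F n :=
    ext fun i j => (hJ i j).trans (one_add_lowerShift_apply i j).symm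
  have hrec := extendByZero_recurrence_of_conj_eq hH
  refine ⟨fun i j hi hj => ?_, fun i j h => ?_⟩
  · have entry := hrec i j
    rwa [extendByZero_of_lt H i.isLt hj, extendByZero_of_lt H hi j.isLt,
      extendByZero_of_lt H hi hj] at entry
  · simpa using eq_zero_of_le_add_of_recurrence (extendByZero H)
      (fun i j hi => extendByZero_of_le_left H hi j) hrec h

/-- Let `F` be a field of characteristic 2 with an involution `c`, `n ≥ 2`,
and `J` the unipotent lower Jordan block of size `n`. If `Jᵀ * H * J = H` then (a)
`H_{i,j+1} + H_{i+1,j} + H_{i+1,j+1} = 0` and (b) `H_{ij} = 0` whenever (in 1-indexed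
terms) `i + j ≥ n + 2` (0-indexed: `i + j ≥ n`); in particular `H` is
anti-lower-triangular. -/
theorem invariant_form_of_jordan_block_char_two
    {F : Type*} [Field F] [CharP F 2] (c : F →+* F) (hc : ∀ x, c (c x) = x)
    (n : ℕ) (hn : 2 ≤ n)
    (J : Matrix (Fin n) (Fin n) F)
    (hJ : ∀ i j : Fin n, J i j =
      if (i : ℕ) = (j : ℕ) then 1 else if (i : ℕ) = (j : ℕ) + 1 then 1 else 0)
    (H : Matrix (Fin n) (Fin n) F)
    (hH : Jᵀ * H * J = H) :
    (∀ (i j : Fin n) (hi : (i : ℕ) + 1 < n) (hj : (j : ℕ) + 1 < n),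
      H i ⟨(j : ℕ) + 1, hj⟩ + H ⟨(i : ℕ) + 1, hi⟩ j
        + H ⟨(i : ℕ) + 1, hi⟩ ⟨(j : ℕ) + 1, hj⟩ = 0) ∧
    (∀ i j : Fin n, n ≤ (i : ℕ) + (j : ℕ) → H i j = 0) :=
  invariant_form_of_jordan_block_char_two_general n J hJ H hH
end
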